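/- arXiv:1711.09685 — 2 statements merged into one kernel-verified Lean document; each statement's English description precedes it below -/
import Mathlib

section
/- The function v ↦ θ(v,τ)/v extends to a holomorphic function at v = 0 with value θ'(0,τ) = 2π q^{1/8} ∏_{j=1}^∞ (1−q^j)³, and in particular θ'(0,τ) ≠ 0. -/
/-!
The product formula gives `θ(v,τ) = sin(πv) · g(v)` with
`g(v) = 2 q^{1/8} (q;q)_∞ (e^{2πiv}q;q)_∞ (e^{-2πiv}q;q)_∞`, and `w ↦ (wq;q)_∞` is entire as a
locally uniformly convergent product of entire functions when `|q| < 1`. So `θ(·,τ)` is entire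
and vanishes at `0`, and `θ(v,τ)/v` is its difference quotient at `0`, which is holomorphic with
value `θ'(0,τ) = π g(0)`. Finally `g(0) ≠ 0` since `(q;q)_∞` is an absolutely convergent product
of nonzero factors.
-/

noncomputable section

/-- `πC` is the real number `π` viewed as a complex number. -/
def πC : ℂ := Real.pi

/-- The nome `q = e^{2πiτ}`. -/
def nome (τ : ℂ) : ℂ := Complex.exp (2 * πC * Complex.I * τ)

/-- The Jacobi theta function
`θ(v,τ) = 2 q^{1/8} sin(πv) ∏_{j=1}^∞ (1−q^j)(1−e^{2πiv}q^j)(1−e^{−2πiv}q^j)`,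
where `q^{1/8} = e^{πiτ/4}`. -/
def jacobiθ (τ v : ℂ) : ℂ :=
  2 * Complex.exp (πC * Complex.I * τ / 4) * Complex.sin (πC * v) *
    ∏' j : ℕ,
      ((1 - nome τ ^ (j + 1)) *
       (1 - Complex.exp (2 * πC * Complex.I * v) * nome τ ^ (j + 1)) *
       (1 - Complex.exp (-(2 * πC * Complex.I * v)) * nome τ ^ (j + 1)))

open Complex

/-- The `q`-Pochhammer symbol `(wq; q)_∞`. -/
def qProd (q w : ℂ) : ℂ := ∏' n : ℕ, (1 - w * q ^ (n + 1))

section qProd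

variable {q : ℂ}

lemma summable_norm_mul_pow_succ (hq : ‖q‖ < 1) (w : ℂ) :
    Summable fun n : ℕ ↦ ‖w * q ^ (n + 1)‖ := by
  simpa [pow_succ', ← mul_assoc] using
    (summable_geometric_of_lt_one (norm_nonneg q) hq).mul_left (‖w‖ * ‖q‖)

lemma multipliable_one_sub_mul_pow (hq : ‖q‖ < 1) (w : ℂ) :
    Multipliable fun n : ℕ ↦ 1 - w * q ^ (n + 1) := by
  simpa [sub_eq_add_neg] using multipliable_one_add_of_summable
    (f := fun n : ℕ ↦ -(w * q ^ (n + 1))) (by simpa using summable_norm_mul_pow_succ hq w)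

lemma differentiable_qProd (hq : ‖q‖ < 1) : Differentiable ℂ (qProd q) := by
  intro w₀
  set R := ‖w₀‖ + 1
  have hprod : HasProdLocallyUniformlyOn (fun n w ↦ 1 + -(w * q ^ (n + 1)))
      (fun w ↦ ∏' n : ℕ, (1 + -(w * q ^ (n + 1)))) (Metric.ball 0 R) := by
    refine Summable.hasProdLocallyUniformlyOn_nat_one_add Metric.isOpen_ball
      (summable_norm_mul_pow_succ hq R) (.of_forall fun n w hw ↦ ?_) fun n ↦ by fun_prop
    have hw : ‖w‖ ≤ R := (mem_ball_zero_iff.mp hw).le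
    simpa [Real.norm_of_nonneg (by positivity : (0 : ℝ) ≤ R)] using
      mul_le_mul_of_nonneg_right hw (norm_nonneg (q ^ (n + 1)))
  have hdiff := hprod.differentiableOn (.of_forall fun s ↦ by
    simpa [Finset.prod_fn] using DifferentiableOn.finsetProd fun _ _ ↦ by fun_prop)
    Metric.isOpen_ball
  have hqProd : qProd q = fun w ↦ ∏' n : ℕ, (1 + -(w * q ^ (n + 1))) := by
    ext w
    simp only [qProd, sub_eq_add_neg]
  rw [hqProd]
  exact hdiff.differentiableAt (Metric.isOpen_ball.mem_nhds (by simp [R]))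

lemma qProd_one (q : ℂ) : qProd q 1 = ∏' n : ℕ, (1 - q ^ (n + 1)) := by
  simp [qProd]

lemma qProd_one_ne_zero (hq : ‖q‖ < 1) : qProd q 1 ≠ 0 := by
  have hfac (n : ℕ) : 1 + -q ^ (n + 1) ≠ 0 := by
    rw [← sub_eq_add_neg, sub_ne_zero]
    intro h
    have := pow_lt_one₀ (norm_nonneg q) hq (Nat.succ_ne_zero n)
    rw [← norm_pow, ← h, norm_one] at this
    exact lt_irrefl _ this
  simpa [qProd, sub_eq_add_neg] using tprod_one_add_ne_zero_of_summable hfac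
    (by simpa using summable_norm_mul_pow_succ hq 1)

lemma tprod_one_sub_pow_mul_one_sub_mul_pow (hq : ‖q‖ < 1) (a b : ℂ) :
    ∏' n : ℕ, ((1 - q ^ (n + 1)) * (1 - a * q ^ (n + 1)) * (1 - b * q ^ (n + 1))) =
      qProd q 1 * qProd q a * qProd q b := by
  have h1 := ModularForm.multipliable_one_sub_pow hq
  rw [(h1.mul (multipliable_one_sub_mul_pow hq a)).tprod_mul (multipliable_one_sub_mul_pow hq b),
    h1.tprod_mul (multipliable_one_sub_mul_pow hq a), qProd_one, qProd, qProd]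

end qProd

lemma analyticAt_ite_div_of_hasDerivAt {f : ℂ → ℂ} {d : ℂ} (hf : Differentiable ℂ f)
    (hf0 : f 0 = 0) (hd : HasDerivAt f d 0) :
    AnalyticAt ℂ (fun v ↦ if v = 0 then d else f v / v) 0 := by
  have hslope : (fun v ↦ if v = 0 then d else f v / v) = dslope f 0 := by
    ext v
    by_cases hv : v = 0
    · simp [hv, hd.deriv]
    · simp [hv, dslope_of_ne f hv, slope_def_field, hf0]
  rw [hslope]
  exact ((differentiableOn_dslope Filter.univ_mem).mpr hf.differentiableOn).analyticAt
    Filter.univ_mem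

lemma norm_nome_lt_one {τ : ℂ} (hτ : 0 < τ.im) : ‖nome τ‖ < 1 :=
  UpperHalfPlane.norm_exp_two_pi_I_lt_one ⟨τ, hτ⟩

def jacobiθDivSin (τ v : ℂ) : ℂ :=
  2 * exp (πC * I * τ / 4) *
    (qProd (nome τ) 1 * qProd (nome τ) (exp (2 * πC * I * v)) *
      qProd (nome τ) (exp (-(2 * πC * I * v))))

section jacobiθ

variable {τ : ℂ}

lemma jacobiθ_eq_sin_mul (hτ : 0 < τ.im) (v : ℂ) :
    jacobiθ τ v = sin (πC * v) * jacobiθDivSin τ v := by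
  rw [jacobiθ, jacobiθDivSin, tprod_one_sub_pow_mul_one_sub_mul_pow (norm_nome_lt_one hτ)]
  ring

lemma differentiable_jacobiθDivSin (hτ : 0 < τ.im) : Differentiable ℂ (jacobiθDivSin τ) := by
  have hP := differentiable_qProd (norm_nome_lt_one hτ)
  unfold jacobiθDivSin
  fun_prop

lemma jacobiθDivSin_zero (hτ : 0 < τ.im) :
    jacobiθDivSin τ 0 = 2 * exp (πC * I * τ / 4) * ∏' n : ℕ, (1 - nome τ ^ (n + 1)) ^ 3 := by
  simp only [jacobiθDivSin, mul_zero, neg_zero, exp_zero]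
  rw [qProd_one, (ModularForm.multipliable_one_sub_pow (norm_nome_lt_one hτ)).tprod_pow]
  ring

lemma hasDerivAt_jacobiθ_zero (hτ : 0 < τ.im) :
    HasDerivAt (jacobiθ τ) (πC * jacobiθDivSin τ 0) 0 := by
  have hsin : HasDerivAt (fun v ↦ sin (πC * v)) πC 0 := by
    simpa using ((hasDerivAt_id (0 : ℂ)).const_mul πC).csin
  have := hsin.fun_mul (differentiable_jacobiθDivSin hτ 0).hasDerivAt
  rw [funext (jacobiθ_eq_sin_mul hτ)]
  simpa using this

lemma differentiable_jacobiθ (hτ : 0 < τ.im) : Differentiable ℂ (jacobiθ τ) := by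
  rw [funext (jacobiθ_eq_sin_mul hτ)]
  exact (by fun_prop : Differentiable ℂ fun v ↦ sin (πC * v)).mul
    (differentiable_jacobiθDivSin hτ)

end jacobiθ

/-- `v ↦ θ(v,τ)/v` extends holomorphically at `v = 0` with value
`θ'(0,τ) = 2π q^{1/8} ∏_{j≥1}(1−q^j)³ ≠ 0`; in particular `θ'(0,τ)` is the derivative
of `θ(·,τ)` at `0`. -/
theorem jacobiθ_div_v_analyticAt_zero (τ : ℂ) (hτ : 0 < τ.im) :
    AnalyticAt ℂ
      (fun v : ℂ => if v = 0 then
          2 * πC * Complex.exp (πC * Complex.I * τ / 4) * ∏' j : ℕ, (1 - nome τ ^ (j + 1)) ^ 3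
        else jacobiθ τ v / v) 0 ∧
    HasDerivAt (fun v => jacobiθ τ v)
      (2 * πC * Complex.exp (πC * Complex.I * τ / 4) * ∏' j : ℕ, (1 - nome τ ^ (j + 1)) ^ 3) 0 ∧
    2 * πC * Complex.exp (πC * Complex.I * τ / 4) * ∏' j : ℕ, (1 - nome τ ^ (j + 1)) ^ 3 ≠ 0 := by
  have hderiv_eq : πC * jacobiθDivSin τ 0 =
      2 * πC * exp (πC * I * τ / 4) * ∏' j : ℕ, (1 - nome τ ^ (j + 1)) ^ 3 := by
    rw [jacobiθDivSin_zero hτ]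
    ring
  have hderiv := hderiv_eq ▸ hasDerivAt_jacobiθ_zero hτ
  refine ⟨analyticAt_ite_div_of_hasDerivAt (differentiable_jacobiθ hτ) (by simp [jacobiθ]) hderiv,
    hderiv, ?_⟩
  rw [← hderiv_eq]
  simp [jacobiθDivSin, πC, Real.pi_ne_zero, exp_ne_zero, qProd_one_ne_zero (norm_nome_lt_one hτ)]

end
end

section
/- The Jacobi triple-product-defined functions satisfy the Jacobi identity θ'(0,τ) = π θ₁(0,τ) θ₂(0,τ) θ₃(0,τ), i.e., 2π e^{πiτ/4} ∏_{j≥1}(1−q^j)³ = π · 2e^{πiτ/4}∏_{j≥1}(1−q^j)(1+q^j)² · ∏_{j≥1}(1−q^j)(1−q^{j−1/2})² · ∏_{j≥1}(1−q^j)(1+q^{j−1/2})². -/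
/-! With `x = e^{πiτ}`, so that `q = x²`, the common factors `2π e^{πiτ/4} ∏ (1 - q^j)³`
cancel and the identity becomes Euler's `∏ (1 + x^{2n}) (1 - x^{2n-1}) (1 + x^{2n-1}) = 1`.
Pairing factors as `(1 - y)(1 + y) = 1 - y²` turns `∏ (1 - x^{2n})` times Euler's product
into `∏ (1 - x^{4n}) ∏ (1 - x^{4n-2})`, which is `∏ (1 - x^{2n})` again, split by the parity
of `n`; this product does not vanish for `‖x‖ < 1`, so it cancels. -/

noncomputable section

section PowerProducts

variable {𝕜 : Type*} [NormedField 𝕜] {x : 𝕜} {e : ℕ → ℕ}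

lemma summable_norm_pow_comp (hx : ‖x‖ < 1) (he : ∀ n, n < e n) :
    Summable fun n ↦ ‖x ^ e n‖ :=
  (summable_geometric_of_lt_one (norm_nonneg x) hx).of_nonneg_of_le (fun _ ↦ norm_nonneg _)
    fun n ↦ by
      rw [norm_pow]
      exact pow_le_pow_of_le_one (norm_nonneg x) hx.le (he n).le

variable [CompleteSpace 𝕜]

lemma multipliable_one_add_pow_comp (hx : ‖x‖ < 1) (he : ∀ n, n < e n) :
    Multipliable fun n ↦ 1 + x ^ e n :=
  multipliable_one_add_of_summable (summable_norm_pow_comp hx he)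

lemma multipliable_one_sub_pow_comp (hx : ‖x‖ < 1) (he : ∀ n, n < e n) :
    Multipliable fun n ↦ 1 - x ^ e n := by
  simpa [sub_eq_add_neg] using
    multipliable_one_add_of_summable (f := fun n ↦ -x ^ e n)
      (by simpa using summable_norm_pow_comp hx he)

lemma tprod_one_sub_pow_comp_ne_zero (hx : ‖x‖ < 1) (he : ∀ n, n < e n) :
    ∏' n, (1 - x ^ e n) ≠ 0 := by
  have hne : ∀ n, 1 + -x ^ e n ≠ 0 := fun n ↦ by
    rw [← sub_eq_add_neg, sub_ne_zero]
    refine ne_of_apply_ne norm ?_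
    rw [norm_one, norm_pow]
    exact (pow_lt_one₀ (norm_nonneg x) hx (Nat.ne_zero_of_lt (he n))).ne'
  simpa [sub_eq_add_neg] using
    tprod_one_add_ne_zero_of_summable hne (by simpa using summable_norm_pow_comp hx he)

lemma tprod_one_sub_pow_comp_mul_tprod_one_add_pow_comp (hx : ‖x‖ < 1) (he : ∀ n, n < e n) :
    (∏' n, (1 - x ^ e n)) * ∏' n, (1 + x ^ e n) = ∏' n, (1 - x ^ (2 * e n)) := by
  rw [← (multipliable_one_sub_pow_comp hx he).tprod_mul (multipliable_one_add_pow_comp hx he)]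
  exact tprod_congr fun n ↦ by ring

theorem euler_tprod_eq_one (hx : ‖x‖ < 1) :
    (∏' n, (1 + x ^ (2 * (n + 1)))) *
      ((∏' n, (1 - x ^ (2 * n + 1))) * ∏' n, (1 + x ^ (2 * n + 1))) = 1 := by
  have hodd : ∀ n, n < 2 * n + 1 := fun n ↦ by omega
  have heven : ∀ n, n < 2 * (n + 1) := fun n ↦ by omega
  have hsplit : (∏' n, (1 - x ^ (2 * (2 * n + 1)))) * ∏' n, (1 - x ^ (2 * (2 * (n + 1))))
      = ∏' n, (1 - x ^ (2 * (n + 1))) := by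
    refine tprod_even_mul_odd (f := fun n ↦ 1 - x ^ (2 * (n + 1)))
      (multipliable_one_sub_pow_comp hx fun n ↦ by omega) ?_
    simpa only [show ∀ n, 2 * n + 1 + 1 = 2 * (n + 1) from fun n ↦ by omega] using
      multipliable_one_sub_pow_comp (e := fun n ↦ 2 * (2 * (n + 1))) hx fun n ↦ by omega
  refine mul_left_cancel₀ (tprod_one_sub_pow_comp_ne_zero hx heven) ?_
  calc (∏' n, (1 - x ^ (2 * (n + 1)))) * ((∏' n, (1 + x ^ (2 * (n + 1)))) *
        ((∏' n, (1 - x ^ (2 * n + 1))) * ∏' n, (1 + x ^ (2 * n + 1))))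
      = (∏' n, (1 - x ^ (2 * (2 * (n + 1))))) * ∏' n, (1 - x ^ (2 * (2 * n + 1))) := by
        rw [← tprod_one_sub_pow_comp_mul_tprod_one_add_pow_comp hx heven,
          ← tprod_one_sub_pow_comp_mul_tprod_one_add_pow_comp hx hodd]
        ring
    _ = (∏' n, (1 - x ^ (2 * (n + 1)))) * 1 := by rw [← hsplit]; ring

theorem tprod_one_sub_pow_cube (hx : ‖x‖ < 1) :
    (∏' j : ℕ, (1 - x ^ (2 * (j + 1))) ^ 3) =
      (∏' j : ℕ, ((1 - x ^ (2 * (j + 1))) * (1 + x ^ (2 * (j + 1))) ^ 2)) *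
      (∏' j : ℕ, ((1 - x ^ (2 * (j + 1))) * (1 - x ^ (2 * j + 1)) ^ 2)) *
      (∏' j : ℕ, ((1 - x ^ (2 * (j + 1))) * (1 + x ^ (2 * j + 1)) ^ 2)) := by
  have hodd : ∀ n, n < 2 * n + 1 := fun n ↦ by omega
  have heven : ∀ n, n < 2 * (n + 1) := fun n ↦ by omega
  have hA := multipliable_one_sub_pow_comp hx heven
  rw [hA.tprod_pow, hA.tprod_mul ((multipliable_one_add_pow_comp hx heven).pow 2),
    hA.tprod_mul ((multipliable_one_sub_pow_comp hx hodd).pow 2),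
    hA.tprod_mul ((multipliable_one_add_pow_comp hx hodd).pow 2),
    (multipliable_one_add_pow_comp hx heven).tprod_pow,
    (multipliable_one_sub_pow_comp hx hodd).tprod_pow,
    (multipliable_one_add_pow_comp hx hodd).tprod_pow]
  set A := ∏' n, (1 - x ^ (2 * (n + 1)))
  set B := ∏' n, (1 + x ^ (2 * (n + 1)))
  set C := ∏' n, (1 - x ^ (2 * n + 1))
  set D := ∏' n, (1 + x ^ (2 * n + 1))
  have hBCD : B * (C * D) = 1 :=
    euler_tprod_eq_one hx
  linear_combination -A ^ 3 * (1 + B * (C * D)) * hBCD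

end PowerProducts

/-- The Jacobi identity `θ'(0,τ) = π θ₁(0,τ) θ₂(0,τ) θ₃(0,τ)`:
`2π e^{πiτ/4} ∏_{j≥1}(1−q^j)³ =
π · 2e^{πiτ/4}∏_{j≥1}(1−q^j)(1+q^j)² · ∏_{j≥1}(1−q^j)(1−q^{j−1/2})² ·
∏_{j≥1}(1−q^j)(1+q^{j−1/2})²`, where `q = e^{2πiτ}` and `q^{1/2} = e^{πiτ}`. -/
theorem jacobi_identity (τ : ℂ) (hτ : 0 < τ.im) :
    2 * πC * Complex.exp (πC * Complex.I * τ / 4) *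
        ∏' j : ℕ, (1 - Complex.exp (πC * Complex.I * τ) ^ (2 * (j + 1))) ^ 3 =
      πC *
        (2 * Complex.exp (πC * Complex.I * τ / 4) *
          ∏' j : ℕ, ((1 - Complex.exp (πC * Complex.I * τ) ^ (2 * (j + 1))) *
            (1 + Complex.exp (πC * Complex.I * τ) ^ (2 * (j + 1))) ^ 2)) *
        (∏' j : ℕ, ((1 - Complex.exp (πC * Complex.I * τ) ^ (2 * (j + 1))) *
            (1 - Complex.exp (πC * Complex.I * τ) ^ (2 * j + 1)) ^ 2)) *
        (∏' j : ℕ, ((1 - Complex.exp (πC * Complex.I * τ) ^ (2 * (j + 1))) *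
            (1 + Complex.exp (πC * Complex.I * τ) ^ (2 * j + 1)) ^ 2)) := by
  have hx : ‖Complex.exp (πC * Complex.I * τ)‖ < 1 := by
    rw [Complex.norm_exp, Real.exp_lt_one_iff]
    simpa [πC] using mul_pos Real.pi_pos hτ
  rw [tprod_one_sub_pow_cube hx]
  ring

end
end
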